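/- arXiv:2209.10579 — 2 statements merged into one kernel-verified Lean document; each statement's English description precedes it below -/
import Mathlib

section
/- Let F(x) = D(T(x) − x) + x where D = diag(ν) is a diagonal matrix with entries ν(i) ∈ (0,1], and T : ℝ^n → ℝ^n is a γ-contraction in the sup-norm with γ ∈ [0,1). Then F is a contraction in the sup-norm with modulus 1 − (min_i ν(i))(1 − γ); in particular ‖F(x) − F(y)‖_∞ ≤ (1 − ν_min(1−γ))‖x − y‖_∞ for all x, y. -/
/-- If `T` is a `γ`-contraction in the sup-norm on `Fin n → ℝ` and
`F x = diag(ν)(T x − x) + x` with `ν i ∈ (0,1]`, then `F` is a contraction with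
modulus `1 − (min_i ν i)(1 − γ)`. -/
theorem averaged_contraction (n : ℕ) (hn : 0 < n)
    (ν : Fin n → ℝ) (hν : ∀ i, 0 < ν i ∧ ν i ≤ 1)
    (γ : ℝ) (hγ0 : 0 ≤ γ) (hγ1 : γ < 1)
    (T : (Fin n → ℝ) → (Fin n → ℝ))
    (hT : ∀ x y, ‖T x - T y‖ ≤ γ * ‖x - y‖)
    (F : (Fin n → ℝ) → (Fin n → ℝ))
    (hF : ∀ x i, F x i = ν i * (T x i - x i) + x i) :
    ∀ x y, ‖F x - F y‖ ≤ (1 - (⨅ i, ν i) * (1 - γ)) * ‖x - y‖ := by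
  intro x y
  haveI : Nonempty (Fin n) := ⟨⟨0, hn⟩⟩
  have hbdd : BddBelow (Set.range ν) := (Set.finite_range ν).bddBelow
  have hinf_le : ∀ i, (⨅ i, ν i) ≤ ν i := fun i => ciInf_le hbdd i
  have hinf_pos : 0 < ⨅ i, ν i := by
    obtain ⟨j, hj⟩ := exists_eq_ciInf_of_finite (f := ν)
    rw [← hj]; exact (hν j).1
  have hinf_le_one : (⨅ i, ν i) ≤ 1 := (hinf_le ⟨0, hn⟩).trans (hν ⟨0, hn⟩).2
  have hmod_nonneg : 0 ≤ 1 - (⨅ i, ν i) * (1 - γ) := by nlinarith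
  rw [pi_norm_le_iff_of_nonneg (by positivity)]
  intro i
  have hxy : 0 ≤ ‖x - y‖ := norm_nonneg _
  have hTi : |T x i - T y i| ≤ γ * ‖x - y‖ := by
    calc |T x i - T y i| = ‖(T x - T y) i‖ := by simp [Pi.sub_apply]
    _ ≤ ‖T x - T y‖ := norm_le_pi_norm _ i
    _ ≤ γ * ‖x - y‖ := hT x y
  have hxyi : |x i - y i| ≤ ‖x - y‖ := by
    calc |x i - y i| = ‖(x - y) i‖ := by simp [Pi.sub_apply]
    _ ≤ ‖x - y‖ := norm_le_pi_norm _ i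
  have key : F x i - F y i = ν i * (T x i - T y i) + (1 - ν i) * (x i - y i) := by
    rw [hF, hF]; ring
  have h1 : |F x i - F y i| ≤ ν i * (γ * ‖x - y‖) + (1 - ν i) * ‖x - y‖ := by
    rw [key]
    refine (abs_add_le _ _).trans (add_le_add ?_ ?_)
    · rw [abs_mul, abs_of_pos (hν i).1]
      exact mul_le_mul_of_nonneg_left hTi (hν i).1.le
    · rw [abs_mul, abs_of_nonneg (by linarith [(hν i).2])]
      exact mul_le_mul_of_nonneg_left hxyi (by linarith [(hν i).2])
  have h2 : ν i * (γ * ‖x - y‖) + (1 - ν i) * ‖x - y‖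
      = (1 - ν i * (1 - γ)) * ‖x - y‖ := by ring
  have h3 : (1 - ν i * (1 - γ)) * ‖x - y‖ ≤ (1 - (⨅ i, ν i) * (1 - γ)) * ‖x - y‖ := by
    apply mul_le_mul_of_nonneg_right _ hxy
    have := hinf_le i
    nlinarith
  calc ‖(F x - F y) i‖ = |F x i - F y i| := by simp [Pi.sub_apply]
  _ ≤ _ := h1.trans (h2.le.trans h3)
end

section
/- Let x_0 ∈ ℝ^n, α_0, M', γ, M be such that 0 < 1 − (1−γ)/M < 1 and M' ≥ 1. Consider stepsizes η_k satisfying η_k ≥ η_{k−1}(1 − (1−γ)/M)^{−1} M' for all k ≥ 1 with η_0 > 0. Suppose a sequence (Δ_k) of nonnegative reals and nonnegative sequences (a_k), (b_k) satisfy Δ_{k+1} ≤ (1 − (1−γ)/M)Δ_k + a_k/(M η_k) − b_k/(M η_k), with a_{k} ≤ M' b_{k−1} for k ≥ 1 and a_0 ≤ D. Then Δ_k ≤ (1 − (1−γ)/M)^k Δ_0 + (1 − (1−γ)/M)^{k−1} D/(M η_0) for all k ≥ 1. -/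
/-- Telescoping argument for linearly converging robust policy mirror descent with
exponentially increasing stepsizes. -/
theorem rpmd_increasing_stepsize_telescoping
    (M M' γ D : ℝ) (Δ a b η : ℕ → ℝ)
    (hM : 0 < M)
    (hq0 : 0 < 1 - (1 - γ) / M) (hq1 : 1 - (1 - γ) / M < 1)
    (hM' : 1 ≤ M')
    (hη0 : 0 < η 0)
    (hη : ∀ k ≥ 1, η k ≥ η (k - 1) * (1 - (1 - γ) / M)⁻¹ * M')
    (hΔ : ∀ k, 0 ≤ Δ k) (ha : ∀ k, 0 ≤ a k) (hb : ∀ k, 0 ≤ b k)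
    (hrec : ∀ k, Δ (k + 1) ≤ (1 - (1 - γ) / M) * Δ k
      + a k / (M * η k) - b k / (M * η k))
    (haM' : ∀ k ≥ 1, a k ≤ M' * b (k - 1))
    (ha0 : a 0 ≤ D) :
    ∀ k ≥ 1, Δ k ≤ (1 - (1 - γ) / M) ^ k * Δ 0
      + (1 - (1 - γ) / M) ^ (k - 1) * D / (M * η 0) := by
  set q := 1 - (1 - γ) / M with hq
  have hM'pos : (0:ℝ) < M' := lt_of_lt_of_le one_pos hM'
  have hqinv : 0 < q⁻¹ := inv_pos.mpr hq0
  have hηpos : ∀ k, 0 < η k := by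
    intro k
    induction k with
    | zero => exact hη0
    | succ n ih =>
      have h := hη (n + 1) (by omega)
      simp only [Nat.add_sub_cancel] at h
      have hpos : 0 < η n * q⁻¹ * M' := mul_pos (mul_pos ih hqinv) hM'pos
      linarith
  have key : ∀ k ≥ 1, Δ k + b (k - 1) / (M * η (k - 1)) ≤
      q ^ k * Δ 0 + q ^ (k - 1) * D / (M * η 0) := by
    intro k hk
    induction k, hk using Nat.le_induction with
    | base =>
      have h := hrec 0
      have hD : a 0 / (M * η 0) ≤ D / (M * η 0) :=
        div_le_div_of_nonneg_right ha0 (mul_pos hM hη0).le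
      simp only [pow_one, pow_zero, one_mul, Nat.sub_self]
      linarith
    | succ n hn ih =>
      have h := hrec n
      have hηn := hη n hn
      have hηn1 : 0 < η (n - 1) := hηpos _
      have hden : 0 < M * (η (n - 1) * q⁻¹ * M') :=
        mul_pos hM (mul_pos (mul_pos hηn1 hqinv) hM'pos)
      have hbound : a n / (M * η n) ≤ q * (b (n - 1) / (M * η (n - 1))) := by
        have h1 : a n / (M * η n) ≤ (M' * b (n - 1)) / (M * (η (n - 1) * q⁻¹ * M')) :=
          div_le_div₀ (mul_nonneg hM'pos.le (hb _)) (haM' n hn) hden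
            (mul_le_mul_of_nonneg_left hηn hM.le)
        have h2 : (M' * b (n - 1)) / (M * (η (n - 1) * q⁻¹ * M')) =
            q * (b (n - 1) / (M * η (n - 1))) := by
          field_simp
        linarith [h2.le, h2.ge]
      have hsub : n - 1 + 1 = n := by omega
      have hpow : q ^ n = q ^ (n - 1) * q := by
        rw [← pow_succ, hsub]
      have hmul := mul_le_mul_of_nonneg_left ih hq0.le
      have hbn : 0 ≤ b n / (M * η n) := div_nonneg (hb _) (mul_pos hM (hηpos _)).le
      simp only [Nat.add_sub_cancel]
      calc Δ (n + 1) + b n / (M * η n)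
          ≤ q * Δ n + a n / (M * η n) := by linarith
        _ ≤ q * Δ n + q * (b (n - 1) / (M * η (n - 1))) := by linarith
        _ = q * (Δ n + b (n - 1) / (M * η (n - 1))) := by ring
        _ ≤ q * (q ^ n * Δ 0 + q ^ (n - 1) * D / (M * η 0)) := hmul
        _ = q ^ (n + 1) * Δ 0 + q ^ n * D / (M * η 0) := by
            rw [pow_succ, hpow]; ring
  intro k hk
  have hb' : 0 ≤ b (k - 1) / (M * η (k - 1)) :=
    div_nonneg (hb _) (mul_pos hM (hηpos _)).le
  linarith [key k hk]
end
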